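/- arXiv:2505.21247 — 7 statements merged into one kernel-verified Lean document; each statement's English description precedes it below -/
import Mathlib

section
/- Let L : ℝ^N × ℝ_{>0} → ℝ satisfy: (i) for each fixed β > 0, L(·, β) is convex, continuously differentiable, L(0, β) = 0, and L(x, β) > 0 for x ≠ 0; (ii) L is positively homogeneous of degree 1 jointly: L(Cx, Cβ) = C·L(x, β) for C > 0; (iii) lim_{|x|/β → ∞} (L(x, β) − MAE(x))/β = −1, where MAE(x) = (1/N)·Σ_i |x_i|. Fix γ ∈ (0, 1) and x ≠ 0. Then the equation L(x, γ·l) = l has a unique solution l > 0. -/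
open Filter Set Topology

/-
The map `β ↦ L(x, β)` is antitone: by homogeneity `t L(x, β₂) = L(t x, β₁)` for
`t = β₁ / β₂ ≤ 1`, and by convexity with `L(0, β₁) = 0` this is at most `t L(x, β₁)`.
It is also continuous (homogeneity reduces it to `L(·, 1)`, which is convex hence
continuous) and tends to `MAE x > 0` as `β → 0⁺`. So `l ↦ L(x, γ l) - l` is strictly
decreasing, positive near `0⁺` and negative for large `l`, and has a unique zero.
-/

/-- Mean absolute error of an error vector. -/
noncomputable def MAE {N : ℕ} (x : Fin N → ℝ) : ℝ := (1 / N) * ∑ i, |x i|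

theorem MAE_pos {N : ℕ} {x : Fin N → ℝ} (hx : x ≠ 0) : 0 < MAE x := by
  obtain ⟨i, hi⟩ := Function.ne_iff.mp hx
  have hN : (0 : ℝ) < N := Nat.cast_pos.mpr (Fin.pos_iff_nonempty.mpr ⟨i⟩)
  have hsum : 0 < ∑ j, |x j| := (abs_pos.mpr hi).trans_le
    (Finset.single_le_sum (fun j _ => abs_nonneg (x j)) (Finset.mem_univ i))
  unfold MAE
  positivity

theorem tendsto_nhdsGT_zero_of_tendsto_sub_div {g : ℝ → ℝ} {m c : ℝ}
    (h : Tendsto (fun β => (g β - m) / β) (𝓝[>] 0) (𝓝 c)) :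
    Tendsto g (𝓝[>] 0) (𝓝 m) := by
  have hprod : Tendsto (fun β => m + β * ((g β - m) / β)) (𝓝[>] 0) (𝓝 (m + 0 * c)) :=
    tendsto_const_nhds.add (tendsto_nhdsWithin_of_tendsto_nhds tendsto_id |>.mul h)
  rw [zero_mul, add_zero] at hprod
  refine hprod.congr' ?_
  filter_upwards [self_mem_nhdsWithin] with β (hβ : 0 < β)
  field_simp
  ring

theorem existsUnique_pos_fixedPoint_of_antitoneOn {g : ℝ → ℝ}
    (hanti : AntitoneOn g (Ioi 0)) (hcont : ContinuousOn g (Ioi 0)) {m : ℝ} (hm : 0 < m)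
    (hlim : Tendsto g (𝓝[>] 0) (𝓝 m)) :
    ∃! l, 0 < l ∧ g l = l := by
  have hgap : Tendsto (fun l => g l - l) (𝓝[>] 0) (𝓝 (m - 0)) :=
    hlim.sub (tendsto_nhdsWithin_of_tendsto_nhds tendsto_id)
  rw [sub_zero] at hgap
  obtain ⟨a, hga, ha : 0 < a⟩ :=
    ((hgap.eventually (eventually_gt_nhds hm)).and self_mem_nhdsWithin).exists
  set b := max a (g a) + 1
  have hab : a ≤ b := by linarith [le_max_left a (g a)]
  have hgb : g b < b := by
    have : g b ≤ g a := hanti ha (ha.trans_le hab) hab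
    linarith [le_max_right a (g a)]
  have hIcc : Icc a b ⊆ Ioi 0 := fun y hy => ha.trans_le hy.1
  obtain ⟨c, hc, hgc⟩ := intermediate_value_Icc' hab ((hcont.mono hIcc).sub continuousOn_id)
    (show (0 : ℝ) ∈ Icc (g b - b) (g a - a) from ⟨by linarith, by linarith⟩)
  have hc0 : 0 < c := hIcc hc
  refine ⟨c, ⟨hc0, sub_eq_zero.mp hgc⟩, fun l ⟨hl0, hgl⟩ => ?_⟩
  have hcc : g c = c := sub_eq_zero.mp hgc
  rcases le_total l c with hlc | hcl
  · linarith [hanti hl0 hc0 hlc]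
  · linarith [hanti hc0 hl0 hcl]

section Homogeneous

variable {E : Type*} [AddCommGroup E] [Module ℝ E] {L : E → ℝ → ℝ}

theorem eq_mul_of_homogeneous
    (hhom : ∀ C : ℝ, 0 < C → ∀ (y : E) (β : ℝ), L (C • y) (C * β) = C * L y β)
    (x : E) {β : ℝ} (hβ : 0 < β) : L x β = β * L (β⁻¹ • x) 1 := by
  simpa [smul_smul, hβ.ne'] using hhom β hβ (β⁻¹ • x) 1

theorem antitoneOn_of_convexOn_of_homogeneous
    (hconv : ∀ β : ℝ, 0 < β → ConvexOn ℝ univ (L · β))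
    (hzero : ∀ β : ℝ, 0 < β → L 0 β = 0)
    (hhom : ∀ C : ℝ, 0 < C → ∀ (y : E) (β : ℝ), L (C • y) (C * β) = C * L y β)
    (x : E) : AntitoneOn (L x) (Ioi 0) := by
  intro β₁ (h₁ : 0 < β₁) β₂ (h₂ : 0 < β₂) h₁₂
  set t := β₁ / β₂
  have ht : 0 < t := div_pos h₁ h₂
  have hconvex : L (t • x) β₁ ≤ t * L x β₁ := by
    simpa [hzero β₁ h₁] using (hconv β₁ h₁).2 (mem_univ x) (mem_univ 0) ht.le
      (sub_nonneg.mpr ((div_le_one h₂).mpr h₁₂)) (add_sub_cancel t 1)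
  have hscale : L (t • x) β₁ = t * L x β₂ := by
    simpa [t, div_mul_cancel₀ β₁ h₂.ne'] using hhom t ht x β₂
  exact le_of_mul_le_mul_left (hscale ▸ hconvex) ht

theorem continuousOn_of_homogeneous [TopologicalSpace E] [ContinuousSMul ℝ E]
    (hcont : Continuous (L · 1))
    (hhom : ∀ C : ℝ, 0 < C → ∀ (y : E) (β : ℝ), L (C • y) (C * β) = C * L y β)
    (x : E) :
    ContinuousOn (L x) (Ioi 0) := by
  have hinv : ContinuousOn (fun β : ℝ => β⁻¹ • x) (Ioi 0) :=
    (continuousOn_inv₀.mono fun β (hβ : 0 < β) => hβ.ne').smul continuousOn_const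
  exact (continuousOn_id.mul (hcont.comp_continuousOn hinv)).congr
    fun β (hβ : 0 < β) => eq_mul_of_homogeneous hhom x hβ

end Homogeneous

theorem self_consistent_loss_exists_unique_general {N : ℕ} (L : (Fin N → ℝ) → ℝ → ℝ)
    (hconv : ∀ β : ℝ, 0 < β → ConvexOn ℝ Set.univ (fun y => L y β))
    (hzero : ∀ β : ℝ, 0 < β → L 0 β = 0)
    (hhom : ∀ C : ℝ, 0 < C → ∀ (y : Fin N → ℝ) (β : ℝ), L (C • y) (C * β) = C * L y β)
    (hlim : ∀ (y : Fin N → ℝ), y ≠ 0 →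
      Tendsto (fun β : ℝ => (L y β - MAE y) / β) (nhdsWithin 0 (Set.Ioi 0)) (nhds (-1)))
    (γ : ℝ) (hγ : γ ∈ Set.Ioo (0 : ℝ) 1)
    (x : Fin N → ℝ) (hx : x ≠ 0) :
    ∃! l : ℝ, 0 < l ∧ L x (γ * l) = l := by
  have hγ0 : 0 < γ := hγ.1
  have hscale : MapsTo (γ * ·) (Ioi 0) (Ioi 0) := fun l (hl : 0 < l) => mul_pos hγ0 hl
  have hanti := antitoneOn_of_convexOn_of_homogeneous hconv hzero hhom x
  have hcont :=
    continuousOn_of_homogeneous (hconv 1 one_pos).locallyLipschitz.continuous hhom x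
  have hscale_lim : Tendsto (γ * ·) (𝓝[>] 0) (𝓝[>] 0) := by
    simpa using TendstoNhdsWithinIoi.const_mul hγ0 (tendsto_id (x := 𝓝[>] (0 : ℝ)))
  refine existsUnique_pos_fixedPoint_of_antitoneOn
    (fun a ha b hb hab => hanti (hscale ha) (hscale hb) (mul_le_mul_of_nonneg_left hab hγ0.le))
    (hcont.comp (continuousOn_const.mul continuousOn_id) hscale) (MAE_pos hx)
    ((tendsto_nhdsGT_zero_of_tendsto_sub_div (hlim x hx)).comp hscale_lim)

/-- Existence and uniqueness of the self-consistent loss value: under convexity,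
smoothness, positivity, joint degree-1 positive homogeneity, and the boundary limit
`(L(x,β) − MAE(x))/β → −1` as `β → 0⁺` (equivalently `|x|/β → ∞`), the equation
`L(x, γ·l) = l` has a unique positive solution `l` for each `x ≠ 0` and `γ ∈ (0,1)`. -/
theorem self_consistent_loss_exists_unique {N : ℕ} (L : (Fin N → ℝ) → ℝ → ℝ)
    (hconv : ∀ β : ℝ, 0 < β → ConvexOn ℝ Set.univ (fun y => L y β))
    (hsmooth : ∀ β : ℝ, 0 < β → ContDiff ℝ 1 (fun y => L y β))
    (hzero : ∀ β : ℝ, 0 < β → L 0 β = 0)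
    (hpos : ∀ (y : Fin N → ℝ), y ≠ 0 → ∀ β : ℝ, 0 < β → 0 < L y β)
    (hhom : ∀ C : ℝ, 0 < C → ∀ (y : Fin N → ℝ) (β : ℝ), L (C • y) (C * β) = C * L y β)
    (hlim : ∀ (y : Fin N → ℝ), y ≠ 0 →
      Tendsto (fun β : ℝ => (L y β - MAE y) / β) (nhdsWithin 0 (Set.Ioi 0)) (nhds (-1)))
    (γ : ℝ) (hγ : γ ∈ Set.Ioo (0 : ℝ) 1)
    (x : Fin N → ℝ) (hx : x ≠ 0) :
    ∃! l : ℝ, 0 < l ∧ L x (γ * l) = l :=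
  self_consistent_loss_exists_unique_general L hconv hzero hhom hlim γ hγ x hx
end

section
/- Under the hypotheses of the previous setting (L convex and positive in x, jointly degree-1 positively homogeneous, with the boundary limit lim_{|x|/β→∞}(L(x,β) − MAE(x))/β = −1 and ∇_x L(0,β) = 0), the self-consistent loss L_SC : ℝ^N → ℝ defined by L(x, γ·L_SC(x)) = L_SC(x) for x ≠ 0 and L_SC(0) = 0 satisfies 1 ≤ MAE(x)/L_SC(x) ≤ 1 + γ for every x ≠ 0, where MAE(x) = (1/N)·Σ_i |x_i|. -/
open Filter Set

-- By convexity, an increase anywhere persists with at least the same slope forever.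
theorem ConvexOn.antitone_of_isBoundedUnder_le_atTop {f : ℝ → ℝ} (hf : ConvexOn ℝ univ f)
    (hbdd : IsBoundedUnder (· ≤ ·) atTop f) : Antitone f := by
  intro t s hts
  by_contra! hlt
  have hts' : t < s := lt_of_le_of_ne hts (ne_of_apply_ne f hlt.ne)
  set m := (f s - f t) / (s - t)
  have hm : 0 < m := div_pos (sub_pos.2 hlt) (sub_pos.2 hts')
  have hline : ∀ u, s < u → f s + m * (u - s) ≤ f u := fun u hsu => by
    have := hf.slope_mono_adjacent (mem_univ t) (mem_univ u) hts' hsu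
    rw [le_div_iff₀ (sub_pos.2 hsu)] at this
    linarith
  have hline_tendsto : Tendsto (fun u => f s + m * (u - s)) atTop atTop :=
    tendsto_atTop_add_const_left _ _
      ((tendsto_atTop_add_const_right _ _ tendsto_id).const_mul_atTop hm)
  have hf_tendsto : Tendsto f atTop atTop :=
    tendsto_atTop_mono' _ (eventually_gt_atTop s |>.mono hline) hline_tendsto
  exact not_isBoundedUnder_of_tendsto_atTop hf_tendsto hbdd

theorem ConvexOn.le_of_tendsto_atTop {f : ℝ → ℝ} {c : ℝ} (hf : ConvexOn ℝ univ f)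
    (hl : Tendsto f atTop (nhds c)) (t : ℝ) : c ≤ f t :=
  (hf.antitone_of_isBoundedUnder_le_atTop hl.isBoundedUnder_le).le_of_tendsto hl t

theorem perspective_eq {E : Type*} [AddCommGroup E] [Module ℝ E] {L : E → ℝ → ℝ}
    (hhom : ∀ C : ℝ, 0 < C → ∀ (y : E) (β : ℝ), L (C • y) (C * β) = C * L y β)
    {β : ℝ} (hβ : 0 < β) (x : E) : L x β = β * L (β⁻¹ • x) 1 := by
  have := hhom β hβ (β⁻¹ • x) 1
  rwa [smul_smul, mul_inv_cancel₀ hβ.ne', one_smul, mul_one] at this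

noncomputable def maeDeviation {N : ℕ} (L : (Fin N → ℝ) → ℝ → ℝ) (x : Fin N → ℝ) (t : ℝ) : ℝ :=
  L (t • x) 1 - t * MAE x

section Deviation

variable {N : ℕ} {L : (Fin N → ℝ) → ℝ → ℝ}

theorem convexOn_maeDeviation (hconv : ConvexOn ℝ univ (fun y => L y 1)) (x : Fin N → ℝ) :
    ConvexOn ℝ univ (maeDeviation L x) := by
  have hL : ConvexOn ℝ univ (fun t : ℝ => L (t • x) 1) := by
    simpa [Function.comp_def] using
      hconv.comp_linearMap (LinearMap.toSpanSingleton ℝ (Fin N → ℝ) x)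
  exact hL.sub (LinearMap.concaveOn ((LinearMap.id : ℝ →ₗ[ℝ] ℝ).smulRight (MAE x)) convex_univ)

variable (hhom : ∀ C : ℝ, 0 < C → ∀ (y : Fin N → ℝ) (β : ℝ), L (C • y) (C * β) = C * L y β)
include hhom

theorem maeDeviation_inv {β : ℝ} (hβ : 0 < β) (x : Fin N → ℝ) :
    maeDeviation L x β⁻¹ = (L x β - MAE x) / β := by
  rw [maeDeviation, perspective_eq hhom hβ x]
  field_simp

theorem tendsto_maeDeviation_atTop {x : Fin N → ℝ}
    (hlim : Tendsto (fun β : ℝ => (L x β - MAE x) / β) (nhdsWithin 0 (Ioi 0)) (nhds (-1))) :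
    Tendsto (maeDeviation L x) atTop (nhds (-1)) := by
  refine (hlim.comp tendsto_inv_atTop_nhdsGT_zero).congr' ?_
  filter_upwards [eventually_gt_atTop (0 : ℝ)] with t ht
  simp [← maeDeviation_inv hhom (inv_pos.2 ht)]

theorem mae_sub_le_loss_and_loss_le_mae (hconv : ConvexOn ℝ univ (fun y => L y 1))
    (hzero : L 0 1 = 0) {x : Fin N → ℝ}
    (hlim : Tendsto (fun β : ℝ => (L x β - MAE x) / β) (nhdsWithin 0 (Ioi 0)) (nhds (-1)))
    {β : ℝ} (hβ : 0 < β) : MAE x - β ≤ L x β ∧ L x β ≤ MAE x := by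
  have hlim' := tendsto_maeDeviation_atTop hhom hlim
  have hdev := convexOn_maeDeviation hconv x
  have hlower := hdev.le_of_tendsto_atTop hlim' β⁻¹
  have hupper : maeDeviation L x β⁻¹ ≤ maeDeviation L x 0 :=
    hdev.antitone_of_isBoundedUnder_le_atTop hlim'.isBoundedUnder_le (inv_pos.2 hβ).le
  rw [maeDeviation_inv hhom hβ, le_div_iff₀ hβ] at hlower
  rw [maeDeviation_inv hhom hβ, maeDeviation, zero_smul, hzero, div_le_iff₀ hβ] at hupper
  constructor <;> linarith

end Deviation

theorem self_consistent_loss_mae_bounds_general {N : ℕ} (L : (Fin N → ℝ) → ℝ → ℝ)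
    (hconv : ∀ β : ℝ, 0 < β → ConvexOn ℝ Set.univ (fun y => L y β))
    (hzero : ∀ β : ℝ, 0 < β → L 0 β = 0)
    (hhom : ∀ C : ℝ, 0 < C → ∀ (y : Fin N → ℝ) (β : ℝ), L (C • y) (C * β) = C * L y β)
    (hlim : ∀ (y : Fin N → ℝ), y ≠ 0 →
      Tendsto (fun β : ℝ => (L y β - MAE y) / β) (nhdsWithin 0 (Set.Ioi 0)) (nhds (-1)))
    (γ : ℝ) (hγ : γ ∈ Set.Ioo (0 : ℝ) 1)
    (LSC : (Fin N → ℝ) → ℝ)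
    (hLSC : ∀ (y : Fin N → ℝ), y ≠ 0 → 0 < LSC y ∧ L y (γ * LSC y) = LSC y)
    (x : Fin N → ℝ) (hx : x ≠ 0) :
    1 ≤ MAE x / LSC x ∧ MAE x / LSC x ≤ 1 + γ := by
  obtain ⟨hLSCpos, hfixed⟩ := hLSC x hx
  obtain ⟨hlower, hupper⟩ := mae_sub_le_loss_and_loss_le_mae hhom (hconv 1 one_pos)
    (hzero 1 one_pos) (hlim x hx) (mul_pos hγ.1 hLSCpos)
  rw [hfixed] at hlower hupper
  rw [le_div_iff₀ hLSCpos, div_le_iff₀ hLSCpos]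
  constructor <;> linarith

/-- The self-consistent loss `L_SC`, defined by `L(x, γ·L_SC(x)) = L_SC(x)`,
satisfies `1 ≤ MAE(x)/L_SC(x) ≤ 1 + γ`. -/
theorem self_consistent_loss_mae_bounds {N : ℕ} (L : (Fin N → ℝ) → ℝ → ℝ)
    (hconv : ∀ β : ℝ, 0 < β → ConvexOn ℝ Set.univ (fun y => L y β))
    (hzero : ∀ β : ℝ, 0 < β → L 0 β = 0)
    (hpos : ∀ (y : Fin N → ℝ), y ≠ 0 → ∀ β : ℝ, 0 < β → 0 < L y β)
    (hhom : ∀ C : ℝ, 0 < C → ∀ (y : Fin N → ℝ) (β : ℝ), L (C • y) (C * β) = C * L y β)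
    (hgrad : ∀ β : ℝ, 0 < β → fderiv ℝ (fun y => L y β) 0 = 0)
    (hlim : ∀ (y : Fin N → ℝ), y ≠ 0 →
      Tendsto (fun β : ℝ => (L y β - MAE y) / β) (nhdsWithin 0 (Set.Ioi 0)) (nhds (-1)))
    (γ : ℝ) (hγ : γ ∈ Set.Ioo (0 : ℝ) 1)
    (LSC : (Fin N → ℝ) → ℝ)
    (hLSC0 : LSC 0 = 0)
    (hLSC : ∀ (y : Fin N → ℝ), y ≠ 0 → 0 < LSC y ∧ L y (γ * LSC y) = LSC y)
    (x : Fin N → ℝ) (hx : x ≠ 0) :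
    1 ≤ MAE x / LSC x ∧ MAE x / LSC x ≤ 1 + γ :=
  self_consistent_loss_mae_bounds_general L hconv hzero hhom hlim γ hγ LSC hLSC x hx
end

section
/- Let L : ℝ^N × ℝ_{>0} → ℝ be such that for each fixed β > 0, L(·, β) is convex with L(0, β) = 0 and ∇_x L(0, β) = 0, and suppose lim_{t → ∞} (L(t·x, β) − MAE(t·x))/β = −1 holds uniformly in the sense that L(x, β) − MAE(x) is non-increasing along rays and tends to −β. Then for all x ∈ ℝ^N and β > 0: (a) L(x, β) ≥ MAE(x) − β, and (b) L(x, β) < MAE(x) whenever x ≠ 0. -/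
/-!
(a) The difference `L(t x) - MAE(t x)` decreases along the ray towards its limit `-β`, so at
`t = 1` it is at least `-β`.
(b) Convexity and `L(0) = 0` give `L(t x) ≥ t L(x)` for `t ≥ 1`, while `MAE(t x) = t MAE(x)`.
Hence `L(x) ≥ MAE(x)` would keep the difference nonnegative along the ray, contradicting the
limit `-β < 0`.
-/

open Filter

lemma MAE_smul {N : ℕ} (t : ℝ) (x : Fin N → ℝ) : MAE (t • x) = |t| * MAE x := by
  simp only [MAE, Pi.smul_apply, smul_eq_mul, abs_mul, ← Finset.mul_sum]
  ring

lemma AntitoneOn.le_of_tendsto_atTop {α β : Type*} [TopologicalSpace α] [Preorder α]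
    [OrderClosedTopology α] [Preorder β] [IsDirectedOrder β] {f : β → α} {a : α} {b : β}
    (hf : AntitoneOn f (Set.Ici b)) (ha : Tendsto f atTop (nhds a)) : a ≤ f b :=
  haveI : Nonempty β := ⟨b⟩
  le_of_tendsto ha <| (eventually_ge_atTop b).mono fun _ hbx =>
    hf Set.self_mem_Ici hbx hbx

lemma ConvexOn.mul_le_apply_smul {E : Type*} [AddCommGroup E] [Module ℝ E] {s : Set E}
    {f : E → ℝ} (hf : ConvexOn ℝ s f) (h0 : 0 ∈ s) (hf0 : f 0 = 0) {x : E} {t : ℝ}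
    (hx : t • x ∈ s) (ht : 1 ≤ t) : t * f x ≤ f (t • x) := by
  have ht0 : 0 < t := zero_lt_one.trans_le ht
  have hinv : t⁻¹ ≤ 1 := inv_le_one_of_one_le₀ ht
  have key := hf.2 hx h0 (inv_nonneg.2 ht0.le) (sub_nonneg.2 hinv) (add_sub_cancel _ _)
  rw [smul_smul, inv_mul_cancel₀ ht0.ne', one_smul, smul_zero, add_zero, hf0, smul_zero,
    add_zero, smul_eq_mul] at key
  calc t * f x ≤ t * (t⁻¹ * f (t • x)) := by gcongr
    _ = f (t • x) := by field_simp

theorem loss_mae_sandwich_general {N : ℕ} (L : (Fin N → ℝ) → ℝ → ℝ)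
    (hconv : ∀ β : ℝ, 0 < β → ConvexOn ℝ Set.univ (fun y => L y β))
    (hzero : ∀ β : ℝ, 0 < β → L 0 β = 0)
    (hray_mono : ∀ (y : Fin N → ℝ) (β : ℝ), 0 < β →
      AntitoneOn (fun t : ℝ => L (t • y) β - MAE (t • y)) (Set.Ioi 0))
    (hray_lim : ∀ (y : Fin N → ℝ), y ≠ 0 → ∀ β : ℝ, 0 < β →
      Tendsto (fun t : ℝ => L (t • y) β - MAE (t • y)) atTop (nhds (-β)))
    (x : Fin N → ℝ) (β : ℝ) (hβ : 0 < β) :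
    MAE x - β ≤ L x β ∧ (x ≠ 0 → L x β < MAE x) := by
  refine ⟨?_, fun hx => ?_⟩
  · rcases eq_or_ne x 0 with rfl | hx
    · simp [MAE, hzero β hβ, hβ.le]
    · have h := ((hray_mono x β hβ).mono (Set.Ici_subset_Ioi.2 one_pos)).le_of_tendsto_atTop
        (hray_lim x hx β hβ)
      simp only [one_smul] at h
      linarith
  · by_contra! h
    have hray_nonneg : ∀ᶠ t : ℝ in atTop, 0 ≤ L (t • x) β - MAE (t • x) := by
      filter_upwards [eventually_ge_atTop 1] with t ht
      have hL := (hconv β hβ).mul_le_apply_smul trivial (hzero β hβ) (Set.mem_univ (t • x)) ht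
      rw [MAE_smul, abs_of_nonneg (zero_le_one.trans ht)]
      nlinarith
    have := ge_of_tendsto (hray_lim x hx β hβ) hray_nonneg
    linarith

/-- Bounds `MAE(x) − β ≤ L(x,β) < MAE(x)` for a convex loss with zero value and
gradient at the origin whose difference from the MAE is non-increasing along rays
and tends to `−β`. -/
theorem loss_mae_sandwich {N : ℕ} (L : (Fin N → ℝ) → ℝ → ℝ)
    (hconv : ∀ β : ℝ, 0 < β → ConvexOn ℝ Set.univ (fun y => L y β))
    (hzero : ∀ β : ℝ, 0 < β → L 0 β = 0)
    (hgrad : ∀ β : ℝ, 0 < β → fderiv ℝ (fun y => L y β) 0 = 0)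
    (hray_mono : ∀ (y : Fin N → ℝ) (β : ℝ), 0 < β →
      AntitoneOn (fun t : ℝ => L (t • y) β - MAE (t • y)) (Set.Ioi 0))
    (hray_lim : ∀ (y : Fin N → ℝ), y ≠ 0 → ∀ β : ℝ, 0 < β →
      Tendsto (fun t : ℝ => L (t • y) β - MAE (t • y)) atTop (nhds (-β)))
    (x : Fin N → ℝ) (β : ℝ) (hβ : 0 < β) :
    MAE x - β ≤ L x β ∧ (x ≠ 0 → L x β < MAE x) :=
  loss_mae_sandwich_general L hconv hzero hray_mono hray_lim x β hβ
end

section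
/- For fixed t ≠ 0, the function g(β) = (β/ln 2)·ln(cosh(t·ln 2/β)) on β > 0 has strictly positive second derivative: g''(β) > 0 for all β > 0. -/
/-!
With `L = log 2` and `c = t L`, the loss is `L⁻¹ · b φ(c / b)` for `φ = log ∘ cosh`. Differentiating
`b φ(c / b)` twice, the first-order terms cancel and leave `c² / b³ · φ''(c / b)`, which is positive
because `φ'' = 1 / cosh²` and `c ≠ 0`.
-/

open Real Filter

section MulCompDiv

variable {φ φ' : ℝ → ℝ} {c b : ℝ}

theorem hasDerivAt_const_div (c : ℝ) (hb : b ≠ 0) :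
    HasDerivAt (fun x => c / x) (-(c / b ^ 2)) b := by
  simpa [div_eq_mul_inv] using (hasDerivAt_inv hb).const_mul c

theorem hasDerivAt_mul_comp_div {d : ℝ} (hφ : HasDerivAt φ d (c / b)) (hb : b ≠ 0) :
    HasDerivAt (fun x => x * φ (c / x)) (φ (c / b) - c / b * d) b := by
  have hdiv := hasDerivAt_const_div c hb
  refine ((hasDerivAt_id b).mul (hφ.comp b hdiv)).congr_deriv ?_
  simp only [id, Function.comp_apply]
  field_simp
  ring

theorem deriv_deriv_mul_comp_div {φ'' : ℝ} (hφ : ∀ x, HasDerivAt φ (φ' x) x)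
    (hφ' : HasDerivAt φ' φ'' (c / b)) (hb : b ≠ 0) :
    deriv (deriv fun x => x * φ (c / x)) b = c ^ 2 / b ^ 3 * φ'' := by
  have hdiv := hasDerivAt_const_div c hb
  have hderiv : deriv (fun x => x * φ (c / x)) =ᶠ[nhds b]
      fun x => φ (c / x) - c / x * φ' (c / x) :=
    (eventually_ne_nhds hb).mono fun x hx => (hasDerivAt_mul_comp_div (hφ _) hx).deriv
  rw [hderiv.deriv_eq]
  refine (((hφ _).comp b hdiv).sub (hdiv.mul (hφ'.comp b hdiv))).deriv.trans ?_
  simp only [Function.comp_apply]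
  field_simp
  ring

end MulCompDiv

theorem Real.hasDerivAt_log_cosh (x : ℝ) : HasDerivAt (fun x => log (cosh x)) (tanh x) x := by
  simpa [tanh_eq_sinh_div_cosh] using (hasDerivAt_cosh x).log (cosh_pos x).ne'

theorem Real.hasDerivAt_tanh (x : ℝ) : HasDerivAt tanh (cosh x ^ 2)⁻¹ x := by
  have htanh : tanh = fun x => sinh x / cosh x := funext tanh_eq_sinh_div_cosh
  rw [htanh]
  refine ((hasDerivAt_sinh x).div (hasDerivAt_cosh x) (cosh_pos x).ne').congr_deriv ?_
  rw [← sq, ← sq, cosh_sq_sub_sinh_sq, one_div]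

/-- The single-coordinate rescaled LogCosh loss, as a function of the smoothness
scale `β`, has strictly positive second derivative on `(0, ∞)` for fixed `t ≠ 0`. -/
theorem logcosh_second_deriv_pos (t : ℝ) (ht : t ≠ 0) (β : ℝ) (hβ : 0 < β) :
    0 < deriv (deriv (fun b : ℝ => (b / Real.log 2) * Real.log (Real.cosh (t * Real.log 2 / b)))) β := by
  have hscale : (fun b : ℝ => (b / log 2) * log (cosh (t * log 2 / b))) =
      fun b => (log 2)⁻¹ * (b * log (cosh (t * log 2 / b))) := by
    funext b
    ring
  rw [hscale, deriv_const_mul_field', deriv_const_mul_field']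
  beta_reduce
  rw [deriv_deriv_mul_comp_div hasDerivAt_log_cosh (hasDerivAt_tanh _) hβ.ne']
  have hc : t * log 2 ≠ 0 := mul_ne_zero ht (log_pos one_lt_two).ne'
  positivity
end

section
/- Let Z be an N × F real matrix (N ≤ F), q ∈ ℝ^N, λ > 0, and set K̃ = ZᵀZ + λI_F, α = K̃^{-1}Zᵀq, and qʳ = Zα. For i ∈ {1, …, N}, let z_i denote the i-th row of Z, and let α^{(i)} be the ridge regression coefficients obtained by training on all rows except the i-th: α^{(i)} = (Z_{-i}ᵀZ_{-i} + λI_F)^{-1} Z_{-i}ᵀ q_{-i}, where Z_{-i} and q_{-i} omit the i-th row/entry. Then the leave-one-out prediction error satisfies z_iᵀα^{(i)} − q_i = (qʳ_i − q_i)/(1 − z_iᵀ K̃^{-1} z_i), provided z_iᵀ K̃^{-1} z_i ≠ 1. -/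
/-!
Deleting row `i` turns the ridge system `K̃ α = Zᵀ q` into the rank-one downdate
`(K̃ - zᵢ zᵢᵀ) α⁽ⁱ⁾ = Zᵀ q - qᵢ zᵢ`. By Sherman–Morrison this downdated system is solved by
`α + t K̃⁻¹ zᵢ` with `t = (qʳᵢ - qᵢ) / (1 - zᵢᵀ K̃⁻¹ zᵢ)`, and pairing with `zᵢ` gives the formula.
-/

open Matrix

namespace Matrix

variable {m n R 𝕜 : Type*}

theorem posDef_transpose_mul_self_add_smul_one [Fintype m] [Fintype n] [DecidableEq n] (A : Matrix m n ℝ)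
    {lam : ℝ} (hlam : 0 < lam) : (Aᵀ * A + lam • (1 : Matrix n n ℝ)).PosDef :=
  PosDef.posSemidef_add (posSemidef_conjTranspose_mul_self A) (PosDef.one.smul hlam)

section RowDeletion

variable [Fintype m] [DecidableEq m]

theorem transpose_mul_self_submatrix_ne [NonUnitalNonAssocRing R] (Z : Matrix m n R) (i : m) :
    (Z.submatrix ((↑) : {j // j ≠ i} → m) id)ᵀ * Z.submatrix (↑) id =
      Zᵀ * Z - vecMulVec (Z i) (Z i) := by
  ext k l
  simp only [mul_apply, sub_apply, transpose_apply, vecMulVec_apply,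
    Fintype.sum_eq_add_sum_subtype_ne _ i]
  abel

theorem transpose_submatrix_ne_mulVec [CommRing R] (Z : Matrix m n R) (q : m → R) (i : m) :
    (Z.submatrix ((↑) : {j // j ≠ i} → m) id)ᵀ *ᵥ (fun j => q j) = Zᵀ *ᵥ q - q i • Z i := by
  ext k
  simp only [mulVec, dotProduct, Pi.sub_apply, Pi.smul_apply, smul_eq_mul, transpose_apply,
    submatrix_apply, id, Fintype.sum_eq_add_sum_subtype_ne (fun j => Z j k * q j) i]
  ring

end RowDeletion

section ShermanMorrison

variable [Fintype n] [DecidableEq n]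

theorem det_sub_vecMulVec [CommRing R] {K : Matrix n n R} (hK : IsUnit K.det) (u v : n → R) :
    (K - vecMulVec u v).det = K.det * (1 - v ⬝ᵥ K⁻¹ *ᵥ u) := by
  rw [sub_eq_add_neg, ← vecMulVec_neg, vecMulVec_eq Unit, det_add_mul _ _ hK]
  congr 1
  rw [det_unique]
  simp only [PUnit.default_eq_unit, add_apply, one_apply_eq, mul_apply, replicateRow_apply,
    Pi.neg_apply, neg_mul, Finset.sum_neg_distrib, replicateCol_apply, Finset.sum_mul, mul_assoc,
    dotProduct, mulVec, Finset.mul_sum, sub_eq_add_neg, add_right_inj, neg_inj]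
  exact Finset.sum_comm

variable [Field 𝕜] {K : Matrix n n 𝕜} {u v : n → 𝕜}

theorem inv_sub_vecMulVec_mulVec (hK : IsUnit K.det) (hc : v ⬝ᵥ K⁻¹ *ᵥ u ≠ 1)
    (b : n → 𝕜) (y : 𝕜) :
    (K - vecMulVec u v)⁻¹ *ᵥ (b - y • u) =
      K⁻¹ *ᵥ b + ((v ⬝ᵥ K⁻¹ *ᵥ b - y) / (1 - v ⬝ᵥ K⁻¹ *ᵥ u)) • K⁻¹ *ᵥ u := by
  have hc' : 1 - v ⬝ᵥ K⁻¹ *ᵥ u ≠ 0 := sub_ne_zero.2 hc.symm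
  have hK' : IsUnit (K - vecMulVec u v).det := by
    rw [det_sub_vecMulVec hK]
    exact hK.mul hc'.isUnit
  have := invertibleOfIsUnitDet _ hK'
  have hKK (x : n → 𝕜) : K *ᵥ K⁻¹ *ᵥ x = x := by
    rw [mulVec_mulVec, mul_nonsing_inv _ hK, one_mulVec]
  refine inv_mulVec_eq_vec ?_
  rw [sub_mulVec, vecMulVec_mulVec, mulVec_add, mulVec_smul, hKK, hKK, dotProduct_add,
    dotProduct_smul]
  ext k
  simp only [Pi.add_apply, Pi.sub_apply, Pi.smul_apply, smul_eq_mul, op_smul_eq_smul]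
  field_simp
  ring

theorem dotProduct_inv_sub_vecMulVec_mulVec_sub (hK : IsUnit K.det) (hc : v ⬝ᵥ K⁻¹ *ᵥ u ≠ 1)
    (b : n → 𝕜) (y : 𝕜) :
    v ⬝ᵥ (K - vecMulVec u v)⁻¹ *ᵥ (b - y • u) - y =
      (v ⬝ᵥ K⁻¹ *ᵥ b - y) / (1 - v ⬝ᵥ K⁻¹ *ᵥ u) := by
  have hc' : 1 - v ⬝ᵥ K⁻¹ *ᵥ u ≠ 0 := sub_ne_zero.2 hc.symm
  rw [inv_sub_vecMulVec_mulVec hK hc, dotProduct_add, dotProduct_smul, smul_eq_mul]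
  field_simp
  ring

end ShermanMorrison


end Matrix

theorem ridge_leave_one_out_formula_general {N F : ℕ}
    (Z : Matrix (Fin N) (Fin F) ℝ) (q : Fin N → ℝ) (lam : ℝ) (hlam : 0 < lam)
    (i : Fin N)
    -- full-data ridge objects
    (Kt : Matrix (Fin F) (Fin F) ℝ)
    (hKt : Kt = Zᵀ * Z + lam • (1 : Matrix (Fin F) (Fin F) ℝ))
    (α : Fin F → ℝ) (hα : α = Kt⁻¹.mulVec (Zᵀ.mulVec q))
    (qr : Fin N → ℝ) (hqr : qr = Z.mulVec α)
    -- leave-one-out ridge objects (rows of `Z`, entries of `q`, with index `i` omitted)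
    (Zmi : Matrix {j : Fin N // j ≠ i} (Fin F) ℝ)
    (hZmi : Zmi = Matrix.of (fun (j : {j : Fin N // j ≠ i}) (k : Fin F) => Z j.val k))
    (αi : Fin F → ℝ)
    (hαi : αi = (Zmiᵀ * Zmi + lam • (1 : Matrix (Fin F) (Fin F) ℝ))⁻¹.mulVec
        (Zmiᵀ.mulVec (fun j : {j : Fin N // j ≠ i} => q j.val)))
    (hdenom : (fun k => Z i k) ⬝ᵥ Kt⁻¹.mulVec (fun k => Z i k) ≠ 1) :
    (fun k => Z i k) ⬝ᵥ αi - q i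
      = (qr i - q i) / (1 - (fun k => Z i k) ⬝ᵥ Kt⁻¹.mulVec (fun k => Z i k)) := by
  have hK : IsUnit Kt.det :=
    (isUnit_iff_isUnit_det _).mp (hKt ▸ posDef_transpose_mul_self_add_smul_one Z hlam).isUnit
  have hαi_downdate : αi = (Kt - vecMulVec (Z i) (Z i))⁻¹ *ᵥ (Zᵀ *ᵥ q - q i • Z i) := by
    rw [hαi, hKt, ← sub_add_eq_add_sub, ← transpose_mul_self_submatrix_ne,
      ← transpose_submatrix_ne_mulVec, hZmi]
    rfl
  have hqr_i : qr i = Z i ⬝ᵥ Kt⁻¹ *ᵥ (Zᵀ *ᵥ q) := by rw [hqr, hα]; rfl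
  rw [hαi_downdate, hqr_i]
  exact dotProduct_inv_sub_vecMulVec_mulVec_sub hK hdenom _ _

/-- Closed-form leave-one-out cross-validation error for linear ridge regression:
the prediction error of the model trained with row `i` left out equals
`(qʳᵢ − qᵢ)/(1 − zᵢᵀ K̃⁻¹ zᵢ)`. -/
theorem ridge_leave_one_out_formula {N F : ℕ} (hNF : N ≤ F)
    (Z : Matrix (Fin N) (Fin F) ℝ) (q : Fin N → ℝ) (lam : ℝ) (hlam : 0 < lam)
    (i : Fin N)
    -- full-data ridge objects
    (Kt : Matrix (Fin F) (Fin F) ℝ)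
    (hKt : Kt = Zᵀ * Z + lam • (1 : Matrix (Fin F) (Fin F) ℝ))
    (α : Fin F → ℝ) (hα : α = Kt⁻¹.mulVec (Zᵀ.mulVec q))
    (qr : Fin N → ℝ) (hqr : qr = Z.mulVec α)
    -- leave-one-out ridge objects (rows of `Z`, entries of `q`, with index `i` omitted)
    (Zmi : Matrix {j : Fin N // j ≠ i} (Fin F) ℝ)
    (hZmi : Zmi = Matrix.of (fun (j : {j : Fin N // j ≠ i}) (k : Fin F) => Z j.val k))
    (αi : Fin F → ℝ)
    (hαi : αi = (Zmiᵀ * Zmi + lam • (1 : Matrix (Fin F) (Fin F) ℝ))⁻¹.mulVec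
        (Zmiᵀ.mulVec (fun j : {j : Fin N // j ≠ i} => q j.val)))
    (hdenom : (fun k => Z i k) ⬝ᵥ Kt⁻¹.mulVec (fun k => Z i k) ≠ 1) :
    (fun k => Z i k) ⬝ᵥ αi - q i
      = (qr i - q i) / (1 - (fun k => Z i k) ⬝ᵥ Kt⁻¹.mulVec (fun k => Z i k)) :=
  ridge_leave_one_out_formula_general Z q lam hlam i Kt hKt α hα qr hqr Zmi hZmi αi hαi hdenom
end

section
/- Let F : ℝ^N × ℝ → ℝ be defined piecewise by F(x, l) = L(x, γl) − l for l > 0 and F(x, l) = MAE(x) − (γ+1)l for l ≤ 0, where γ ∈ (0,1), MAE(x) = (1/N)Σ|x_i|, and L satisfies: L is convex in x for fixed β, jointly positively homogeneous of degree 1, and lim_{β→0⁺}(L(x,β) − MAE(x))/β = −1 with left and right l-derivatives of F at l = 0 both equal to −(γ+1). If additionally F is convex in l for fixed x and in x for fixed l, and F restricted to each half {l > 0}, {l ≤ 0} is convex jointly and these pieces agree to first order at l = 0, then F is jointly convex on ℝ^N × ℝ. -/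
open Filter

/-!
On `{l ≤ 0}` the function is the convex function `g(x, l) = MAE x − (γ + 1) l`, and since
`l ↦ F x l` is convex with derivative `−(γ + 1)` at `0`, `g` is a global minorant of `F` that
touches it on the interface `{l = 0}`. A segment crossing the interface at `r` can therefore be
split at `r`: `F r = g r` is below the chord by convexity of `g`, and each of the two pieces lies
in a closed half-space on which `F` is convex. Convexity on the closed half-space `{l ≥ 0}`
follows from convexity on the open one by shifting in the `l`-direction, along which `F` is
continuous.
-/

open Set Topology

lemma ConvexOn.add_mul_sub_le_of_hasDerivAt {S : Set ℝ} {f : ℝ → ℝ} {f' x y : ℝ}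
    (hf : ConvexOn ℝ S f) (hx : x ∈ S) (hy : y ∈ S) (hd : HasDerivAt f f' x) :
    f x + f' * (y - x) ≤ f y := by
  rcases lt_trichotomy x y with hxy | rfl | hxy
  · have h := hf.le_slope_of_hasDerivAt hx hy hxy hd
    rw [slope_def_field, le_div_iff₀ (sub_pos.2 hxy)] at h
    linarith
  · simp
  · have h := hf.slope_le_of_hasDerivAt hy hx hxy hd
    rw [slope_def_field, div_le_iff₀ (sub_pos.2 hxy)] at h
    linarith

lemma convexOn_MAE (N : ℕ) : ConvexOn ℝ univ (MAE (N := N)) := by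
  refine ⟨convex_univ, fun x _ y _ a b ha hb _ => ?_⟩
  simp only [MAE, smul_eq_mul, Pi.add_apply, Pi.smul_apply]
  rw [mul_left_comm a, mul_left_comm b, ← mul_add]
  gcongr
  rw [Finset.mul_sum, Finset.mul_sum, ← Finset.sum_add_distrib]
  gcongr with i
  calc |a * x i + b * y i| ≤ |a * x i| + |b * y i| := abs_add_le _ _
    _ = a * |x i| + b * |y i| := by rw [abs_mul, abs_mul, abs_of_nonneg ha, abs_of_nonneg hb]

section Gluing

variable {E : Type*} [AddCommGroup E] [Module ℝ E]

def ConvexAcrossKer (φ : E →ₗ[ℝ] ℝ) (f : E → ℝ) : Prop :=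
  ∀ ⦃x y : E⦄ ⦃a b : ℝ⦄, 0 ≤ a → 0 ≤ b → a + b = 1 → φ (a • x + b • y) = 0 →
    f (a • x + b • y) ≤ a * f x + b * f y

variable {φ : E →ₗ[ℝ] ℝ} {f : E → ℝ}

lemma ConvexAcrossKer.of_minorant {g : E → ℝ} (hg : ConvexOn ℝ univ g) (hgf : g ≤ f)
    (hfg : ∀ x, φ x = 0 → f x = g x) : ConvexAcrossKer φ f := by
  intro x y a b ha hb hab hz
  calc f (a • x + b • y) = g (a • x + b • y) := hfg _ hz
    _ ≤ a * g x + b * g y := hg.2 (mem_univ x) (mem_univ y) ha hb hab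
    _ ≤ a * f x + b * f y := by gcongr <;> apply hgf

lemma ConvexAcrossKer.neg (hf : ConvexAcrossKer φ f) : ConvexAcrossKer (-φ) f :=
  fun _ _ _ _ ha hb hab hz => hf ha hb hab (neg_eq_zero.1 hz)

lemma ConvexAcrossKer.le_of_map_right_nonneg (hf : ConvexAcrossKer φ f)
    (hpos : ConvexOn ℝ {x | 0 ≤ φ x} f) {x y : E} {a b : ℝ} (ha : 0 ≤ a) (hb : 0 ≤ b)
    (hab : a + b = 1) (hy : 0 ≤ φ y) (hz : 0 ≤ φ (a • x + b • y)) :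
    f (a • x + b • y) ≤ a * f x + b * f y := by
  rcases le_or_gt 0 (φ x) with hx | hx
  · exact hpos.2 hx hy ha hb hab
  obtain rfl : b = 1 - a := by linarith
  rcases ha.eq_or_lt with rfl | ha
  · simp
  simp only [map_add, map_smul, smul_eq_mul] at hz
  -- `r` is the point where the segment from `x` to `y` crosses `φ = 0`
  set s := φ y / (φ y - φ x)
  have hxy : 0 < φ y - φ x := by linarith
  have has : a ≤ s := (le_div_iff₀ hxy).2 (by linarith)
  have hs0 : 0 < s := ha.trans_le has
  have hs1 : s ≤ 1 := (div_le_one hxy).2 (by linarith)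
  set r := s • x + (1 - s) • y
  have hr : φ r = 0 := by
    simp only [r, s, map_add, map_smul, smul_eq_mul]
    field_simp
    ring
  -- `0 ≤ φ z` puts `z = a • x + (1 - a) • y` on the segment `[r, y]`, inside `{0 ≤ φ}`
  set c := a / s
  have hcs : c * s = a := div_mul_cancel₀ a hs0.ne'
  have hc0 : 0 ≤ c := div_nonneg ha.le hs0.le
  have hc1 : c ≤ 1 := (div_le_one hs0).2 has
  have hfr : f r ≤ s * f x + (1 - s) * f y := hf hs0.le (sub_nonneg.2 hs1) (by ring) hr
  have hz_eq : a • x + (1 - a) • y = c • r + (1 - c) • y := by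
    rw [← hcs]; module
  calc f (a • x + (1 - a) • y) = f (c • r + (1 - c) • y) := by rw [hz_eq]
    _ ≤ c * f r + (1 - c) * f y :=
      hpos.2 hr.ge hy hc0 (sub_nonneg.2 hc1) (by ring)
    _ ≤ c * (s * f x + (1 - s) * f y) + (1 - c) * f y := by gcongr
    _ = a * f x + (1 - a) * f y := by linear_combination (f x - f y) * hcs

lemma ConvexAcrossKer.le_of_map_combo_nonneg (hf : ConvexAcrossKer φ f)
    (hpos : ConvexOn ℝ {x | 0 ≤ φ x} f) {x y : E} {a b : ℝ} (ha : 0 ≤ a) (hb : 0 ≤ b)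
    (hab : a + b = 1) (hz : 0 ≤ φ (a • x + b • y)) :
    f (a • x + b • y) ≤ a * f x + b * f y := by
  rcases le_or_gt 0 (φ y) with hy | hy
  · exact hf.le_of_map_right_nonneg hpos ha hb hab hy hz
  have hx : 0 ≤ φ x := by
    by_contra! hx
    exact (convex_halfSpace_lt φ.isLinear 0 hx hy ha hb hab).not_ge hz
  rw [add_comm (a • x)] at hz ⊢
  rw [add_comm (a * f x)]
  exact hf.le_of_map_right_nonneg hpos hb ha (by linarith) hx hz

theorem ConvexAcrossKer.convexOn_univ (hf : ConvexAcrossKer φ f)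
    (hneg : ConvexOn ℝ {x | φ x ≤ 0} f) (hpos : ConvexOn ℝ {x | 0 ≤ φ x} f) :
    ConvexOn ℝ univ f := by
  refine ⟨convex_univ, fun x _ y _ a b ha hb hab => ?_⟩
  rcases le_total 0 (φ (a • x + b • y)) with hz | hz
  · exact hf.le_of_map_combo_nonneg hpos ha hb hab hz
  · exact hf.neg.le_of_map_combo_nonneg (by simpa using hneg) ha hb hab (neg_nonneg.2 hz)

lemma convexOn_setOf_nonneg_of_pos {v : E} (hv : 0 < φ v)
    (hf : ConvexOn ℝ {x | 0 < φ x} f)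
    (hcont : ∀ x, Tendsto (fun t : ℝ => f (x + t • v)) (𝓝[>] 0) (𝓝 (f x))) :
    ConvexOn ℝ {x | 0 ≤ φ x} f := by
  refine ⟨convex_halfSpace_ge φ.isLinear 0, fun x hx y hy a b ha hb hab => ?_⟩
  have hshift : ∀ t > (0 : ℝ),
      f (a • x + b • y + t • v) ≤ a * f (x + t • v) + b * f (y + t • v) := by
    intro t ht
    have hmem : ∀ w, 0 ≤ φ w → 0 < φ (w + t • v) := fun w hw => by
      simp only [map_add, map_smul, smul_eq_mul]; positivity
    have hcombo : a • (x + t • v) + b • (y + t • v) = a • x + b • y + t • v := by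
      linear_combination (norm := module) hab • (t • v)
    simpa only [hcombo, smul_eq_mul] using hf.2 (hmem x hx) (hmem y hy) ha hb hab
  exact le_of_tendsto_of_tendsto (hcont _) (((hcont x).const_mul a).add ((hcont y).const_mul b))
    (eventually_nhdsWithin_of_forall hshift)

end Gluing

theorem piecewise_selfconsistent_convex_general {N : ℕ} (γ : ℝ)
    (F : (Fin N → ℝ) → ℝ → ℝ)
    (hFneg : ∀ (x : Fin N → ℝ) (l : ℝ), l ≤ 0 → F x l = MAE x - (γ + 1) * l)
    (hFderiv : ∀ x : Fin N → ℝ, HasDerivAt (fun l : ℝ => F x l) (-(γ + 1)) 0)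
    (hFconv_l : ∀ x : Fin N → ℝ, ConvexOn ℝ Set.univ (fun l : ℝ => F x l))
    (hFconv_pos : ConvexOn ℝ {p : (Fin N → ℝ) × ℝ | 0 < p.2}
      (fun p : (Fin N → ℝ) × ℝ => F p.1 p.2)) :
    ConvexOn ℝ Set.univ (fun p : (Fin N → ℝ) × ℝ => F p.1 p.2) := by
  set g : (Fin N → ℝ) × ℝ → ℝ := fun p => MAE p.1 - (γ + 1) * p.2
  have hg : ConvexOn ℝ univ g :=
    ((convexOn_MAE N).comp_linearMap (LinearMap.fst ℝ _ ℝ)).sub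
      (((γ + 1) • LinearMap.snd ℝ (Fin N → ℝ) ℝ).concaveOn convex_univ)
  have hgF : ∀ p, g p ≤ F p.1 p.2 := fun p => by
    have := (hFconv_l p.1).add_mul_sub_le_of_hasDerivAt (mem_univ 0) (mem_univ p.2) (hFderiv p.1)
    rw [hFneg p.1 0 le_rfl] at this
    simp only [g]; linarith
  have hneg : ConvexOn ℝ {p : (Fin N → ℝ) × ℝ | p.2 ≤ 0} fun p => F p.1 p.2 :=
    (hg.subset (subset_univ _) (convex_halfSpace_le (LinearMap.snd ℝ _ ℝ).isLinear 0)).congr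
      fun p hp => (hFneg p.1 p.2 hp).symm
  have hpos : ConvexOn ℝ {p : (Fin N → ℝ) × ℝ | 0 ≤ p.2} fun p => F p.1 p.2 := by
    refine convexOn_setOf_nonneg_of_pos (φ := LinearMap.snd ℝ _ ℝ)
      (v := ((0 : Fin N → ℝ), (1 : ℝ))) one_pos hFconv_pos fun p => ?_
    have hcont := continuousOn_univ.1 ((hFconv_l p.1).continuousOn isOpen_univ)
    simpa [Function.comp_def] using
      ((hcont.comp (continuous_const_add p.2)).tendsto 0).mono_left nhdsWithin_le_nhds
  exact (ConvexAcrossKer.of_minorant (φ := LinearMap.snd ℝ _ ℝ) hg hgF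
    fun p hp => hFneg p.1 p.2 hp.le).convexOn_univ hneg hpos

/-- Gluing step for the convexity of the self-consistent loss: the piecewise
function `F(x,l) = L(x,γl) − l` for `l > 0` and `F(x,l) = MAE(x) − (γ+1)l` for
`l ≤ 0`, convex on each half-space, continuous and agreeing to first order in `l`
at the interface `l = 0`, is jointly convex. -/
theorem piecewise_selfconsistent_convex {N : ℕ} (γ : ℝ) (hγ : γ ∈ Set.Ioo (0 : ℝ) 1)
    (L : (Fin N → ℝ) → ℝ → ℝ) (F : (Fin N → ℝ) → ℝ → ℝ)
    (hFpos : ∀ (x : Fin N → ℝ) (l : ℝ), 0 < l → F x l = L x (γ * l) - l)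
    (hFneg : ∀ (x : Fin N → ℝ) (l : ℝ), l ≤ 0 → F x l = MAE x - (γ + 1) * l)
    (hLconv : ∀ β : ℝ, 0 < β → ConvexOn ℝ Set.univ (fun y => L y β))
    (hLhom : ∀ C : ℝ, 0 < C → ∀ (y : Fin N → ℝ) (β : ℝ), L (C • y) (C * β) = C * L y β)
    (hLlim : ∀ (y : Fin N → ℝ), y ≠ 0 →
      Tendsto (fun β : ℝ => (L y β - MAE y) / β) (nhdsWithin 0 (Set.Ioi 0)) (nhds (-1)))
    (hFderiv : ∀ x : Fin N → ℝ, HasDerivAt (fun l : ℝ => F x l) (-(γ + 1)) 0)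
    (hFcont : Continuous (fun p : (Fin N → ℝ) × ℝ => F p.1 p.2))
    (hFconv_l : ∀ x : Fin N → ℝ, ConvexOn ℝ Set.univ (fun l : ℝ => F x l))
    (hFconv_x : ∀ l : ℝ, ConvexOn ℝ Set.univ (fun x : Fin N → ℝ => F x l))
    (hFconv_pos : ConvexOn ℝ {p : (Fin N → ℝ) × ℝ | 0 < p.2}
      (fun p : (Fin N → ℝ) × ℝ => F p.1 p.2))
    (hFconv_neg : ConvexOn ℝ {p : (Fin N → ℝ) × ℝ | p.2 ≤ 0}
      (fun p : (Fin N → ℝ) × ℝ => F p.1 p.2)) :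
    ConvexOn ℝ Set.univ (fun p : (Fin N → ℝ) × ℝ => F p.1 p.2) :=
  piecewise_selfconsistent_convex_general γ F hFneg hFderiv hFconv_l hFconv_pos
end

section
/- Let F : ℝ^N × ℝ → ℝ be jointly convex and C¹, and suppose for each x the equation F(x, l) = 0 has a unique solution l = L(x) at which ∂F/∂l (x, L(x)) < 0. Then L is convex: for any a, b ∈ ℝ^N and κ ∈ [0,1], L(κa + (1−κ)b) ≤ κL(a) + (1−κ)L(b). -/
/-!
Write `x = κa + (1-κ)b` and `m = κL(a) + (1-κ)L(b)`. Joint convexity of `F` and `F(a, L a) =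
F(b, L b) = 0` give `F(x, m) ≤ 0 = F(x, L x)`. The section `l ↦ F(x, l)` is convex with negative
derivative at `L x`, so every slope into `L x` from the left is negative and `F(x, ·) > 0` left of
`L x`; hence `L x ≤ m`.
-/

open Set

theorem ConvexOn.comp_prodMk {𝕜 E F β : Type*} [Semiring 𝕜] [PartialOrder 𝕜]
    [AddCommMonoid E] [AddCommMonoid F] [AddCommMonoid β] [PartialOrder β]
    [Module 𝕜 E] [Module 𝕜 F] [SMul 𝕜 β] {f : E × F → β} (hf : ConvexOn 𝕜 univ f) (x : E) :
    ConvexOn 𝕜 univ fun y => f (x, y) := by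
  refine ⟨convex_univ, fun y _ z _ a b ha hb hab => ?_⟩
  simpa only [Prod.smul_mk, Prod.mk_add_mk, Convex.combo_self hab] using
    hf.2 (mem_univ (x, y)) (mem_univ (x, z)) ha hb hab

theorem ConvexOn.le_of_le_of_hasDerivAt_neg {S : Set ℝ} {g : ℝ → ℝ} {g' r m : ℝ}
    (hg : ConvexOn ℝ S g) (hm : m ∈ S) (hr : r ∈ S) (hd : HasDerivAt g g' r) (hneg : g' < 0)
    (hle : g m ≤ g r) : r ≤ m := by
  by_contra! hmr
  have hslope : slope g m r ≤ g' := hg.slope_le_of_hasDerivAt hm hr hmr hd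
  have hslope_nonneg : 0 ≤ slope g m r := by
    rw [slope_def_field]
    exact div_nonneg (sub_nonneg.2 hle) (sub_nonneg.2 hmr.le)
  linarith

theorem implicit_root_convex_general {N : ℕ}
    (F : (Fin N → ℝ) → ℝ → ℝ) (L : (Fin N → ℝ) → ℝ)
    (hFconv : ConvexOn ℝ Set.univ (fun p : (Fin N → ℝ) × ℝ => F p.1 p.2))
    (hFsmooth : ContDiff ℝ 1 (fun p : (Fin N → ℝ) × ℝ => F p.1 p.2))
    (hroot : ∀ x, F x (L x) = 0)
    (hderiv_neg : ∀ x, deriv (fun l => F x l) (L x) < 0) :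
    ∀ (a b : Fin N → ℝ) (κ : ℝ), κ ∈ Set.Icc (0 : ℝ) 1 →
      L (κ • a + (1 - κ) • b) ≤ κ * L a + (1 - κ) * L b := by
  rintro a b κ ⟨hκ0, hκ1⟩
  set x := κ • a + (1 - κ) • b
  have hF_le : F x (κ * L a + (1 - κ) * L b) ≤ F x (L x) := by
    have := hFconv.2 (mem_univ (a, L a)) (mem_univ (b, L b)) hκ0 (sub_nonneg.2 hκ1)
      (add_sub_cancel κ 1)
    simpa only [Prod.smul_mk, Prod.mk_add_mk, smul_eq_mul, hroot, mul_zero, add_zero] using this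
  have hd : HasDerivAt (fun l => F x l) (deriv (fun l => F x l) (L x)) (L x) :=
    ((hFsmooth.differentiable one_ne_zero _).comp (L x)
      ((differentiableAt_const x).prodMk differentiableAt_id)).hasDerivAt
  exact (hFconv.comp_prodMk x).le_of_le_of_hasDerivAt_neg (mem_univ _) (mem_univ _) hd
    (hderiv_neg x) hF_le

/-- Implicit-function convexity: if `F` is jointly convex and `C¹`, and for each
`x` the equation `F(x, l) = 0` has the unique solution `l = L(x)`, at which the
partial derivative in `l` is strictly negative, then `L` is convex. -/
theorem implicit_root_convex {N : ℕ}
    (F : (Fin N → ℝ) → ℝ → ℝ) (L : (Fin N → ℝ) → ℝ)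
    (hFconv : ConvexOn ℝ Set.univ (fun p : (Fin N → ℝ) × ℝ => F p.1 p.2))
    (hFsmooth : ContDiff ℝ 1 (fun p : (Fin N → ℝ) × ℝ => F p.1 p.2))
    (hroot : ∀ x, F x (L x) = 0)
    (huniq : ∀ x l, F x l = 0 → l = L x)
    (hderiv_neg : ∀ x, deriv (fun l => F x l) (L x) < 0) :
    ∀ (a b : Fin N → ℝ) (κ : ℝ), κ ∈ Set.Icc (0 : ℝ) 1 →
      L (κ • a + (1 - κ) • b) ≤ κ * L a + (1 - κ) * L b :=
  implicit_root_convex_general F L hFconv hFsmooth hroot hderiv_neg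
end
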